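/- arXiv:1401.3796 — 2 statements merged into one kernel-verified Lean document; each statement's English description precedes it below -/
import Mathlib

section
/- Let 𝐗 = (𝐗(1), 𝐗(2), …) be an infinite exchangeable sequence of random variables taking values in a countable set (e.g. ℕ), and suppose that for every value i one has P(𝐗(1) = i, 𝐗(2) = i) = P(𝐗(1) = i) · P(𝐗(2) = i). Then the random variables 𝐗(1), 𝐗(2), … are independent and identically distributed. -/
open MeasureTheory ProbabilityTheory Filter Function
open scoped ENNReal ProbabilityTheory Topology

noncomputable section

namespace RTrees

variable {V W : Type*}

/-- The degree of a vertex, defined without decidability assumptions. -/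
def gdeg (G : SimpleGraph V) (v : V) : ℕ := (G.neighborSet v).ncard

/-- The number of labeled trees on `Fin n` with degree sequence `D`. -/
def treeCount (n : ℕ) (D : Fin n → ℕ) : ℕ :=
  Nat.card {T : SimpleGraph (Fin n) // T.IsTree ∧ ∀ v, gdeg T v = D v}

/-- `D` belongs to `𝒟_n`, i.e. it is the degree sequence of some labeled tree on `n` nodes. -/
def IsDegSeq (n : ℕ) (D : Fin n → ℕ) : Prop := 0 < treeCount n D

/-- `φ` is a labeled homomorphism from the numbered graph `(F, r)` to `G`. -/
def IsLabHom (F : SimpleGraph V) (r : V → ℕ) (G : SimpleGraph W) (φ : V → W) : Prop :=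
  (∀ ⦃u v⦄, F.Adj u v → G.Adj (φ u) (φ v)) ∧ ∀ v, gdeg G (φ v) = gdeg F v + r v

/-- The number of injective labeled homomorphisms from the numbered graph `(F,r)` to `G`. -/
def injLabCount (F : SimpleGraph V) (r : V → ℕ) (G : SimpleGraph W) : ℕ :=
  Nat.card {φ : V → W // Function.Injective φ ∧ IsLabHom F r G φ}

/-- The sum `R_C` of the remainder degrees over a connected component `C` of `F`. -/
def compRSum (F : SimpleGraph V) (r : V → ℕ) (C : F.ConnectedComponent) : ℕ :=
  ∑ᶠ j ∈ {j | F.connectedComponentMk j = C}, r j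

/-- The number of connected components of `F`. -/
def compCount (F : SimpleGraph V) : ℕ := Nat.card F.ConnectedComponent

/-- The quantity `H(r,F) = ∏_C [R_C · ∏_{j∈C} (D_F(j)+r_j−1)!/r_j!]`, as an
extended nonnegative real. -/
def He (F : SimpleGraph V) (r : V → ℕ) : ℝ≥0∞ :=
  ∏ᶠ C : F.ConnectedComponent,
    (compRSum F r C : ℝ≥0∞) *
      ∏ᶠ j ∈ {j | F.connectedComponentMk j = C},
        ((gdeg F j + r j - 1).factorial : ℝ≥0∞) / ((r j).factorial : ℝ≥0∞)

/-- The (vertex set of the) ball of radius `R` around `x` in `G`. -/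
def ballSet (G : SimpleGraph V) (x : V) (R : ℕ) : Set V :=
  {v | G.Reachable x v ∧ G.dist x v ≤ R}

lemma self_mem_ballSet (G : SimpleGraph V) (x : V) (R : ℕ) : x ∈ ballSet G x R :=
  ⟨SimpleGraph.Reachable.refl x, by simp [SimpleGraph.dist_self]⟩

/-- The ball of radius `R` around `x` in `G` is rooted-isomorphic to `(F, y)`. -/
def RootedBallIso (G : SimpleGraph V) (x : V) (R : ℕ) (F : SimpleGraph W) (y : W) : Prop :=
  ∃ e : (G.induce (ballSet G x R)) ≃g F, e ⟨x, self_mem_ballSet G x R⟩ = y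

/-- The number of vertices of `G` whose `R`-ball is rooted-isomorphic to `(F,y)`;
`p(R, F, U(G))` is this number divided by the number of vertices of `G`. -/
def nbhdCount {n : ℕ} (G : SimpleGraph (Fin n)) (R : ℕ) {k : ℕ}
    (F : SimpleGraph (Fin k)) (y : Fin k) : ℕ :=
  Nat.card {v : Fin n // RootedBallIso G v R F y}

/-- A finite rooted tree (on a vertex set `Fin n`). -/
structure FRT where
  n : ℕ
  G : SimpleGraph (Fin n)
  root : Fin n
  isTree : G.IsTree

/-- The depth of a finite rooted tree: the largest distance from the root. -/
def FRT.depth (A : FRT) : ℕ := Finset.univ.sup fun v => A.G.dist A.root v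

/-- `t_i`: the number of vertices at distance `i` from the root. -/
def FRT.sphere (A : FRT) (i : ℕ) : ℕ := Nat.card {v : Fin A.n // A.G.dist A.root v = i}

/-- The number of root-preserving automorphisms, `|Aut(T_x^l)|`. -/
def FRT.autCard (A : FRT) : ℕ := Nat.card {e : A.G ≃g A.G // e A.root = A.root}

/-- Rooted isomorphism of finite rooted trees. -/
def FRT.isoRel (A B : FRT) : Prop := ∃ e : A.G ≃g B.G, e A.root = B.root

/-- `p(T_x^l) = t_l · ∏_{i ∉ T_l} P0(d_i)·(d_i−1)! / |Aut(T_x^l)|`. -/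
def FRT.p (P0 : ℕ → ℝ≥0∞) (l : ℕ) (A : FRT) : ℝ≥0∞ :=
  (A.sphere l : ℝ≥0∞) *
    (∏ᶠ v ∈ {v : Fin A.n | A.G.dist A.root v ≠ l},
      P0 (gdeg A.G v) * ((gdeg A.G v - 1).factorial : ℝ≥0∞)) / (A.autCard : ℝ≥0∞)

/-!
Fix an event `A` determined by the first `k` coordinates and a value `b`, and put
`B m = {X (k + m) = b}`. By exchangeability `P(A ∩ B m)` does not depend on `m`, and together
with the hypothesis on the first two coordinates the events `B m` are pairwise independent with a
common probability `p`. In `L²` the centred indicators `1_{B m} - p` are then orthogonal vectors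
of equal length, all with the same inner product `c = P(A ∩ B 0) - p P(A)` against `1_A`; pairing
`1_A` with the sum of the first `n` of them gives `n |c| ≤ √n ‖1_A‖ ‖1_{B 0} - p‖`, so `c = 0`.
Induction on `k` yields the product formula for all cylinder events, which for `ℕ`-valued
variables is independence.
-/

open scoped InnerProductSpace

theorem inner_eq_zero_of_orthogonal_of_norm_le {E : Type*} [NormedAddCommGroup E]
    [InnerProductSpace ℝ E] {v : ℕ → E} {C : ℝ} (horth : Pairwise fun m n => ⟪v m, v n⟫_ℝ = 0)
    (hC : ∀ m, ‖v m‖ ≤ C) {x : E} (hx : ∀ m, ⟪x, v m⟫_ℝ = ⟪x, v 0⟫_ℝ) : ⟪x, v 0⟫_ℝ = 0 := by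
  set c := ⟪x, v 0⟫_ℝ
  have key (n : ℕ) : n * (n * c ^ 2) ≤ n * (‖x‖ ^ 2 * C ^ 2) := by
    set S := ∑ m ∈ Finset.range n, v m
    have hxS : ⟪x, S⟫_ℝ = n * c := by simp [S, inner_sum, hx]
    have hSS : ⟪S, S⟫_ℝ ≤ n * C ^ 2 := by
      have : ⟪S, S⟫_ℝ = ∑ m ∈ Finset.range n, ‖v m‖ ^ 2 := by
        simp only [S, sum_inner, inner_sum]
        refine Finset.sum_congr rfl fun m hm => ?_
        rw [Finset.sum_eq_single m (fun n _ hnm => horth hnm) (by simp [hm]),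
          real_inner_self_eq_norm_sq]
      rw [this]
      simpa using Finset.sum_le_sum fun m (_ : m ∈ Finset.range n) =>
        pow_le_pow_left₀ (norm_nonneg _) (hC m) 2
    calc (n : ℝ) * (n * c ^ 2) = ⟪x, S⟫_ℝ * ⟪x, S⟫_ℝ := by rw [hxS]; ring
      _ ≤ ⟪x, x⟫_ℝ * ⟪S, S⟫_ℝ := real_inner_mul_inner_self_le x S
      _ ≤ ‖x‖ ^ 2 * (n * C ^ 2) := by rw [real_inner_self_eq_norm_sq]; gcongr
      _ = n * (‖x‖ ^ 2 * C ^ 2) := by ring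
  by_contra hc
  obtain ⟨n, hn⟩ := exists_nat_gt (‖x‖ ^ 2 * C ^ 2 / c ^ 2)
  have hn0 : (0 : ℝ) < n := lt_of_le_of_lt (by positivity) hn
  have := le_of_mul_le_mul_left (key n) hn0
  rw [div_lt_iff₀ (by positivity)] at hn
  linarith

theorem measure_inter_eq_mul_of_pairwise_indep {Ω : Type*} [MeasurableSpace Ω] {μ : Measure Ω}
    [IsProbabilityMeasure μ] {A : Set Ω} {B : ℕ → Set Ω} (hA : MeasurableSet A)
    (hB : ∀ m, MeasurableSet (B m)) (hBμ : ∀ m, μ (B m) = μ (B 0))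
    (hBB : Pairwise fun m n => μ (B m ∩ B n) = μ (B m) * μ (B n))
    (hAB : ∀ m, μ (A ∩ B m) = μ (A ∩ B 0)) : μ (A ∩ B 0) = μ A * μ (B 0) := by
  set p := μ.real (B 0)
  let ind (s : Set Ω) (hs : MeasurableSet s) : Lp ℝ 2 μ := indicatorConstLp 2 hs (by finiteness) 1
  have inner_ind (s t) (hs : MeasurableSet s) (ht : MeasurableSet t) :
      ⟪ind s hs, ind t ht⟫_ℝ = μ.real (s ∩ t) :=
    L2.real_inner_indicatorConstLp_one_indicatorConstLp_one hs ht
  let v (m : ℕ) : Lp ℝ 2 μ := ind (B m) (hB m) - p • ind Set.univ .univ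
  have hBp (m : ℕ) : μ.real (B m) = p := by simp [p, measureReal_def, hBμ m]
  have hv (m n : ℕ) : ⟪v m, v n⟫_ℝ = μ.real (B m ∩ B n) - p ^ 2 := by
    simp only [v, inner_sub_left, inner_sub_right, real_inner_smul_left, real_inner_smul_right,
      inner_ind, Set.inter_univ, Set.univ_inter, hBp, probReal_univ]
    ring
  have horth : Pairwise fun m n => ⟪v m, v n⟫_ℝ = 0 := fun m n hmn => by
    change ⟪v m, v n⟫_ℝ = 0
    rw [hv, measureReal_def, hBB hmn, ENNReal.toReal_mul, ← measureReal_def, ← measureReal_def,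
      hBp, hBp]
    ring
  have hnorm (m : ℕ) : ‖v m‖ ≤ ‖v 0‖ := by
    rw [norm_eq_sqrt_real_inner, norm_eq_sqrt_real_inner, hv, hv, Set.inter_self, Set.inter_self,
      hBp, hBp]
  have hx (m : ℕ) : ⟪ind A hA, v m⟫_ℝ = μ.real (A ∩ B m) - p * μ.real A := by
    simp only [v, inner_sub_right, real_inner_smul_right, inner_ind, Set.inter_univ]
  have hc := inner_eq_zero_of_orthogonal_of_norm_le horth hnorm (x := ind A hA) fun m => by
    rw [hx, hx, measureReal_def, hAB m, ← measureReal_def]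
  rw [hx, sub_eq_zero] at hc
  rw [← ENNReal.toReal_eq_toReal_iff' (by finiteness) (by finiteness), ENNReal.toReal_mul]
  simpa [p, measureReal_def, mul_comm] using hc

theorem measurableSpace_eq_generateFrom_range_singleton {β : Type*} [MeasurableSpace β]
    [MeasurableSingletonClass β] [Countable β] :
    ‹MeasurableSpace β› = MeasurableSpace.generateFrom (Set.range fun b : β => {b}) := by
  refine le_antisymm (fun s _ => ?_) (MeasurableSpace.generateFrom_le ?_)
  · rw [← Set.biUnion_of_singleton s]
    exact .biUnion s.to_countable fun b _ => MeasurableSpace.measurableSet_generateFrom ⟨b, rfl⟩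
  · rintro _ ⟨b, rfl⟩
    exact measurableSet_singleton b

theorem iIndepFun_of_measure_iInter_preimage_singleton {Ω ι β : Type*} [MeasurableSpace Ω]
    {μ : Measure Ω} [IsProbabilityMeasure μ] [MeasurableSpace β] [MeasurableSingletonClass β]
    [Countable β] {f : ι → Ω → β} (hf : ∀ i, Measurable (f i))
    (h : ∀ (S : Finset ι) (b : ι → β), μ (⋂ i ∈ S, f i ⁻¹' {b i}) = ∏ i ∈ S, μ (f i ⁻¹' {b i})) :
    iIndepFun f μ := by
  rw [iIndepFun_iff_iIndep]
  refine iIndepSets.iIndep (fun i => (hf i).comap_le) (fun i => Set.range fun b => f i ⁻¹' {b})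
    (fun i => ?_) (fun i => ?_) ?_
  · rintro _ ⟨a, rfl⟩ _ ⟨b, rfl⟩ ⟨ω, rfl, hb⟩
    exact ⟨f i ω, by rw [hb, Set.inter_self]⟩
  · rw [measurableSpace_eq_generateFrom_range_singleton (β := β),
      MeasurableSpace.comap_generateFrom, ← Set.range_comp]
    rfl
  · rw [iIndepSets_iff]
    intro S s hs
    obtain rfl | ⟨i₀, hi₀⟩ := S.eq_empty_or_nonempty
    · simp
    have : Nonempty β := (hs i₀ hi₀).elim fun b _ => ⟨b⟩
    choose! b hb using hs
    rw [Set.iInter₂_congr fun i hi => (hb i hi).symm, Finset.prod_congr rfl fun i hi => by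
      rw [← hb i hi]]
    exact h S b

theorem exists_perm_finite_eq_of_injective {k : ℕ} {g : Fin k → ℕ} (hg : Injective g) :
    ∃ σ : Equiv.Perm ℕ, {i | σ i ≠ i}.Finite ∧ ∀ j : Fin k, σ j = g j := by
  obtain ⟨N, hkN, hgN⟩ : ∃ N, k ≤ N ∧ ∀ j, g j < N :=
    ⟨k + ∑ j, (g j + 1), by omega, fun j => by
      have := Finset.single_le_sum (f := fun j => g j + 1) (by simp) (Finset.mem_univ j)
      omega⟩
  let f (i : Finset.range N) : ℕ := if h : (i : ℕ) < k then g ⟨i, h⟩ else 0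
  have hfs : Set.InjOn f {i | (i : ℕ) < k} := fun i (hi : (i : ℕ) < k) j (hj : (j : ℕ) < k) hij =>
    Subtype.ext (Fin.ext_iff.mp (hg (by simpa [f, hi, hj] using hij)))
  have hft : Set.MapsTo f {i | (i : ℕ) < k} (Finset.range N) := fun i (hi : (i : ℕ) < k) => by
    simpa [f, hi] using hgN _
  obtain ⟨τ, hτ⟩ := hft.exists_equiv_extend_of_card_eq (by simp) hfs
  refine ⟨Equiv.Perm.ofSubtype τ, (Finset.range N).finite_toSet.subset fun i hi => ?_, fun j => ?_⟩
  · by_contra hiN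
    exact hi (Equiv.Perm.ofSubtype_apply_of_not_mem τ hiN)
  · have hjN : (j : ℕ) ∈ Finset.range N := Finset.mem_range.mpr (j.2.trans_le hkN)
    rw [Equiv.Perm.ofSubtype_apply_of_mem τ hjN, hτ _ j.2]
    simp [f]

section Exchangeable

variable {Ω : Type*} [MeasurableSpace Ω] {μ : Measure Ω} {X : Ω → ℕ → ℕ}

def Exchangeable (μ : Measure Ω) (X : Ω → ℕ → ℕ) : Prop :=
  ∀ σ : Equiv.Perm ℕ, {i | σ i ≠ i}.Finite → ∀ (k : ℕ) (d : Fin k → ℕ),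
    μ {ω | ∀ i : Fin k, X ω (σ i) = d i} = μ {ω | ∀ i : Fin k, X ω i = d i}

theorem Exchangeable.measure_comp_injective (hX : Exchangeable μ X) {k : ℕ} {g : Fin k → ℕ}
    (hg : Injective g) (d : Fin k → ℕ) :
    μ {ω | ∀ i, X ω (g i) = d i} = μ {ω | ∀ i : Fin k, X ω i = d i} := by
  obtain ⟨σ, hσ, hσg⟩ := exists_perm_finite_eq_of_injective hg
  simpa only [hσg] using hX σ hσ k d

theorem Exchangeable.measure_coord_eq (hX : Exchangeable μ X) (m b : ℕ) :
    μ {ω | X ω m = b} = μ {ω | X ω 0 = b} := by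
  simpa using hX.measure_comp_injective (g := ![m]) (injective_of_subsingleton _) ![b]

theorem Exchangeable.measure_coord_inter_coord (hX : Exchangeable μ X) {b : ℕ}
    (hb : μ {ω | X ω 0 = b ∧ X ω 1 = b} = μ {ω | X ω 0 = b} * μ {ω | X ω 1 = b})
    {m n : ℕ} (hmn : m ≠ n) :
    μ ({ω | X ω m = b} ∩ {ω | X ω n = b}) = μ {ω | X ω m = b} * μ {ω | X ω n = b} := by
  have hg : Injective ![m, n] := by
    intro i j; fin_cases i <;> fin_cases j <;> simp [hmn, hmn.symm]
  have hpair : μ {ω | X ω m = b ∧ X ω n = b} = μ {ω | X ω 0 = b ∧ X ω 1 = b} := by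
    simpa [Fin.forall_fin_two] using hX.measure_comp_injective hg ![b, b]
  change μ {ω | X ω m = b ∧ X ω n = b} = _
  rw [hpair, hb, hX.measure_coord_eq m, hX.measure_coord_eq n, hX.measure_coord_eq 1]

theorem Exchangeable.measure_cylinder_eq_prod [IsProbabilityMeasure μ] (hX : Exchangeable μ X)
    (hmeas : ∀ i, Measurable (X · i))
    (hind : ∀ b, μ {ω | X ω 0 = b ∧ X ω 1 = b} = μ {ω | X ω 0 = b} * μ {ω | X ω 1 = b})
    (k : ℕ) (d : Fin k → ℕ) :
    μ {ω | ∀ i : Fin k, X ω i = d i} = ∏ i, μ {ω | X ω 0 = d i} := by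
  induction k with
  | zero => simp
  | succ k ih =>
    let A := {ω | ∀ i : Fin k, X ω i = d i.castSucc}
    let B (m : ℕ) := {ω | X ω (k + m) = d (Fin.last k)}
    have hA : MeasurableSet A := by
      simp only [A, Set.ofPred_forall]
      exact .iInter fun i => hmeas _ (measurableSet_singleton _)
    have hB (m : ℕ) : MeasurableSet (B m) := hmeas _ (measurableSet_singleton _)
    have hAB (m : ℕ) : μ (A ∩ B m) = μ {ω | ∀ i : Fin (k + 1), X ω i = d i} := by
      have hfix (i : Fin k) : Equiv.swap k (k + m) i = i :=
        Equiv.swap_apply_of_ne_of_ne (by omega) (by omega)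
      rw [← hX.measure_comp_injective ((Equiv.swap k (k + m)).injective.comp Fin.val_injective)]
      congr 1
      ext ω
      simp [A, B, Fin.forall_fin_succ', hfix]
    rw [← hAB 0, measure_inter_eq_mul_of_pairwise_indep hA hB
        (fun m => by simp only [B, hX.measure_coord_eq])
        (fun m n hmn => hX.measure_coord_inter_coord (hind _) (by omega))
        (fun m => by rw [hAB, hAB]),
      ih, Fin.prod_univ_castSucc, hX.measure_coord_eq]

theorem Exchangeable.measure_iInter_preimage_eq_prod [IsProbabilityMeasure μ]
    (hX : Exchangeable μ X) (hmeas : ∀ i, Measurable (X · i))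
    (hind : ∀ b, μ {ω | X ω 0 = b ∧ X ω 1 = b} = μ {ω | X ω 0 = b} * μ {ω | X ω 1 = b})
    (S : Finset ℕ) (b : ℕ → ℕ) :
    μ (⋂ i ∈ S, (X · i) ⁻¹' {b i}) = ∏ i ∈ S, μ ((X · i) ⁻¹' {b i}) := by
  let e := S.equivFin.symm
  have hS : ⋂ i ∈ S, (X · i) ⁻¹' {b i} = {ω | ∀ j, X ω (e j) = b (e j)} := by
    ext ω
    simp only [Set.mem_iInter, Set.mem_preimage, Set.mem_singleton_iff, Set.mem_ofPred_eq]
    exact ⟨fun h j => h _ (e j).2, fun h i hi => by simpa using h (e.symm ⟨i, hi⟩)⟩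
  rw [hS, hX.measure_comp_injective (g := fun j => e j) (Subtype.val_injective.comp e.injective),
    hX.measure_cylinder_eq_prod hmeas hind]
  exact (Fintype.prod_equiv e _ _ fun j => (hX.measure_coord_eq _ _).symm).trans
    (Finset.prod_coe_sort S fun i => μ ((X · i) ⁻¹' {b i}))

theorem Exchangeable.identDistrib_coord (hX : Exchangeable μ X)
    (hmeas : ∀ i, Measurable (X · i)) (i : ℕ) : IdentDistrib (X · i) (X · 0) μ μ where
  aemeasurable_fst := (hmeas i).aemeasurable
  aemeasurable_snd := (hmeas 0).aemeasurable
  map_eq := Measure.ext_of_singleton fun b => by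
    rw [Measure.map_apply (hmeas i) (measurableSet_singleton b),
      Measure.map_apply (hmeas 0) (measurableSet_singleton b)]
    exact hX.measure_coord_eq i b

end Exchangeable

/-- An infinite exchangeable sequence of `ℕ`-valued random variables in
which the first two coordinates are uncorrelated events (`P(X₁=i, X₂=i) = P(X₁=i)·P(X₂=i)`
for all `i`) is i.i.d. -/
theorem exchangeable_degenerate
    (Ω : Type*) [MeasureSpace Ω] [IsProbabilityMeasure (ℙ : Measure Ω)]
    (X : Ω → ℕ → ℕ) (hmeas : ∀ i, Measurable fun ω => X ω i)
    (hexch : ∀ (σ : Equiv.Perm ℕ), {i | σ i ≠ i}.Finite →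
      ∀ (k : ℕ) (d : Fin k → ℕ),
        ℙ {ω | ∀ i : Fin k, X ω (σ i) = d i} = ℙ {ω | ∀ i : Fin k, X ω i = d i})
    (hind : ∀ i : ℕ, ℙ {ω | X ω 0 = i ∧ X ω 1 = i} =
      ℙ {ω | X ω 0 = i} * ℙ {ω | X ω 1 = i}) :
    iIndepFun (fun i ω => X ω i) ℙ ∧
      ∀ i : ℕ, IdentDistrib (fun ω => X ω i) (fun ω => X ω 0) ℙ ℙ := by
  have hX : Exchangeable ℙ X := hexch
  exact ⟨iIndepFun_of_measure_iInter_preimage_singleton hmeas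
    (hX.measure_iInter_preimage_eq_prod hmeas hind), hX.identDistrib_coord hmeas⟩

end RTrees
end
end

section
/- Let G be a labeled tree on n vertices and let T_x^l be a finite l-deep rooted tree, l ≥ 1. Let T' be the numbered tree obtained from T_x^l by deleting all vertices at distance l from the root, with remainder degrees r'_i equal to the number of depth-l neighbors of i in T_x^l for i ∈ T_{l−1}, and r'_i = 0 for all other vertices of T'. Then n · p(l, T_x^l, U(G)) · |Aut(T_x^l)| = (number of injective labeled homomorphisms from (T', r') to G) · ∏_{i ∈ T_{l−1}} c_i!, where c_i is the number of depth-l children of i in T_x^l. -/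
open MeasureTheory ProbabilityTheory Filter Function
open scoped ENNReal ProbabilityTheory Topology

noncomputable section

namespace SimpleGraph

variable {V W : Type*} {H : SimpleGraph V} {K : SimpleGraph W}

lemma Connected.exists_adj_dist_add_one (hH : H.Connected) {x v : V} (hv : 0 < H.dist x v) :
    ∃ u, H.Adj u v ∧ H.dist x u + 1 = H.dist x v := by
  obtain ⟨p, hp⟩ := hH.exists_walk_length_eq_dist v x
  cases p with
  | nil => rw [dist_comm, dist_self] at hv; omega
  | cons hvu q =>
    refine ⟨_, hvu.symm, le_antisymm ?_ ?_⟩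
    · have := dist_le q
      rw [Walk.length_cons] at hp
      rw [dist_comm, dist_comm (u := x)]
      omega
    · rw [← dist_eq_one_iff_adj.mpr hvu.symm]
      exact hH.dist_triangle

lemma Connected.preconnected_induce_dist_lt (hH : H.Connected) (x : V) (R : ℕ) :
    (H.induce {v | H.dist x v < R}).Preconnected := by
  have hx : ∀ v, H.dist x v < R → H.dist x x < R := fun v hv => by rw [dist_self]; omega
  suffices h : ∀ d v (hv : H.dist x v < R), H.dist x v = d →
      (H.induce {v | H.dist x v < R}).Reachable ⟨v, hv⟩ ⟨x, hx v hv⟩ by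
    rintro ⟨v, hv⟩ ⟨w, hw⟩
    exact (h _ v hv rfl).trans (h _ w hw rfl).symm
  intro d
  induction d with
  | zero =>
    intro v hv hd
    obtain rfl := hH.dist_eq_zero_iff.mp hd
    rfl
  | succ d ih =>
    intro v hv hd
    obtain ⟨u, huv, hu⟩ := hH.exists_adj_dist_add_one (x := x) (v := v) (by omega)
    have hu' : H.dist x u < R := by omega
    exact (Adj.reachable (G := H.induce _) (u := ⟨v, hv⟩) (v := ⟨u, hu'⟩) huv.symm).trans
      (ih u hu' (by omega))

lemma dist_map_le (f : H →g K) {x y : V} (h : H.Reachable x y) :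
    K.dist (f x) (f y) ≤ H.dist x y := by
  obtain ⟨p, hp⟩ := h.exists_walk_length_eq_dist
  exact hp ▸ (Walk.length_map f p).symm ▸ dist_le (p.map f)

lemma IsAcyclic.adj_of_injective_hom (hK : K.IsAcyclic) (hH : H.Preconnected) (f : H →g K)
    (hf : Function.Injective f) {x y : V} (h : K.Adj (f x) (f y)) : H.Adj x y := by
  obtain ⟨p⟩ := hH x y
  have hmem := isBridge_iff_forall_walk_mem_edges.mp
    (isAcyclic_iff_forall_adj_isBridge.mp hK h) (p.map f)
  obtain ⟨e, he, hfe⟩ := List.mem_map.mp (Walk.edges_map f p ▸ hmem)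
  rw [← Sym2.map_mk, (Sym2.map.injective hf).eq_iff] at hfe
  exact p.adj_of_mem_edges (hfe ▸ he)

lemma IsAcyclic.eq_of_adj_of_notMem_range (hK : K.IsAcyclic) (hH : H.Preconnected)
    (f : H →g K) (hf : Function.Injective f) {w : W} (hw : w ∉ Set.range f) {x y : V}
    (hx : K.Adj w (f x)) (hy : K.Adj w (f y)) : x = y := by
  obtain ⟨p⟩ := hH y x
  have hmem := isBridge_iff_forall_walk_mem_edges.mp
    (isAcyclic_iff_forall_adj_isBridge.mp hK hx) (Walk.cons hy (p.map f))
  rw [Walk.edges_cons, List.mem_cons] at hmem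
  rcases hmem with h | h
  · exact hf (Sym2.congr_right.mp h)
  · refine absurd ?_ hw
    have := (p.map f).fst_mem_support_of_mem_edges h
    rw [Walk.support_map, List.mem_map] at this
    obtain ⟨v, -, hv⟩ := this
    exact ⟨v, hv⟩

lemma IsTree.eq_of_adj_of_dist_add_one (hH : H.IsTree) {x w u u' : V} (hu : H.Adj u w)
    (hu' : H.Adj u' w) (hdu : H.dist x u + 1 = H.dist x w) (hdu' : H.dist x u' + 1 = H.dist x w) :
    u = u' := by
  set s : Set V := {v | H.dist x v < H.dist x w}
  have hmem : ∀ {v}, H.dist x v + 1 = H.dist x w → v ∈ s :=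
    fun {v} h => by change H.dist x v < H.dist x w; omega
  have hw : w ∉ Set.range (Embedding.induce (G := H) s).toHom := by
    rintro ⟨v, hv⟩
    have : H.dist x v < H.dist x w := v.2
    rw [show (v : V) = w from hv] at this
    omega
  exact congrArg Subtype.val <| hH.isAcyclic.eq_of_adj_of_notMem_range
    (hH.connected.preconnected_induce_dist_lt x _) _ (Embedding.induce (G := H) s).injective hw
    (x := ⟨u, hmem hdu⟩) (y := ⟨u', hmem hdu'⟩) hu.symm hu'.symm

end SimpleGraph

namespace RTrees

open SimpleGraph Function

section Degree

variable {V W : Type*} {H : SimpleGraph V} {K : SimpleGraph W}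

lemma gdeg_iso (f : H ≃g K) (v : V) : gdeg K (f v) = gdeg H v := by
  simp only [gdeg, ← Nat.card_coe_set_eq]
  exact (Nat.card_congr (f.mapNeighborSet v)).symm

lemma gdeg_eq_gdeg_induce_add [Finite V] {s : Set V} {v : V} (hv : v ∈ s) :
    gdeg H v = gdeg (H.induce s) ⟨v, hv⟩ + (H.neighborSet v \ s).ncard := by
  have himage : Subtype.val '' (H.induce s).neighborSet ⟨v, hv⟩ = H.neighborSet v ∩ s := by
    ext u
    constructor
    · rintro ⟨u, hu, rfl⟩
      exact ⟨hu, u.2⟩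
    · rintro ⟨hu, hus⟩
      exact ⟨⟨u, hus⟩, hu, rfl⟩
  rw [gdeg, gdeg, ← Set.ncard_image_of_injective _ Subtype.val_injective, himage,
    Set.ncard_inter_add_ncard_sdiff_eq_ncard]

lemma image_neighborSet_of_gdeg_eq [Finite W] (f : H →g K) (hf : Injective f) {v : V}
    (hv : gdeg K (f v) = gdeg H v) : f '' H.neighborSet v = K.neighborSet (f v) :=
  Set.eq_of_subset_of_ncard_le (by rintro _ ⟨u, hu, rfl⟩; exact f.map_adj hu)
    (by rw [Set.ncard_image_of_injective _ hf]; exact hv.le)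

lemma gdeg_map_eq_add_ncard_diff_range [Finite W] (hK : K.IsAcyclic) (hH : H.Preconnected)
    (f : H →g K) (hf : Injective f) (v : V) :
    gdeg K (f v) = gdeg H v + (K.neighborSet (f v) \ Set.range f).ncard := by
  have hinter : K.neighborSet (f v) ∩ Set.range f = f '' H.neighborSet v := by
    ext w
    constructor
    · rintro ⟨hw, u, rfl⟩
      exact ⟨u, hK.adj_of_injective_hom hH f hf hw, rfl⟩
    · rintro ⟨u, hu, rfl⟩
      exact ⟨f.map_adj hu, u, rfl⟩
  rw [gdeg, ← Set.ncard_inter_add_ncard_sdiff_eq_ncard _ (Set.range f), hinter,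
    Set.ncard_image_of_injective _ hf, gdeg]

end Degree

section LabHom

variable {V W : Type*} {F : SimpleGraph V} {r : V → ℕ} {G : SimpleGraph W} {φ : V → W}

def InjLabHom (F : SimpleGraph V) (r : V → ℕ) (G : SimpleGraph W) : Type _ :=
  {φ : V → W // Injective φ ∧ IsLabHom F r G φ}

def IsLabHom.hom (hφ : IsLabHom F r G φ) : F →g G := ⟨φ, fun h => hφ.1 h⟩

lemma IsLabHom.ncard_neighborSet_diff_range [Finite W] (hG : G.IsAcyclic) (hF : F.Preconnected)
    (hφ : IsLabHom F r G φ) (hinj : Injective φ) (v : V) :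
    (G.neighborSet (φ v) \ Set.range φ).ncard = r v := by
  have h := gdeg_map_eq_add_ncard_diff_range hG hF hφ.hom hinj v
  change gdeg G (φ v) = gdeg F v + (G.neighborSet (φ v) \ Set.range φ).ncard at h
  have := hφ.2 v
  omega

end LabHom

namespace FRT

variable (A : FRT) (l : ℕ)

/-! `(A.trunc l, A.remDeg l)` is the numbered tree `(T', r')`, and `A.Level k` is `T_k`. -/

def inner : Set (Fin A.n) := {v | A.G.dist A.root v < l}

abbrev trunc : SimpleGraph (A.inner l) := A.G.induce (A.inner l)

abbrev Level (k : ℕ) : Type := {i : Fin A.n // A.G.dist A.root i = k}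

abbrev DeepChild (i : Fin A.n) : Type := {u : Fin A.n // A.G.Adj i u ∧ A.G.dist A.root u = l}

def remDeg (v : A.inner l) : ℕ := Nat.card (A.DeepChild l v)

variable {A l}

lemma dist_root_le (hdepth : A.depth = l) (a : Fin A.n) : A.G.dist A.root a ≤ l :=
  hdepth ▸ Finset.le_sup (f := fun v => A.G.dist A.root v) (Finset.mem_univ a)

lemma dist_root_eq_of_notMem_inner (hdepth : A.depth = l) {a : Fin A.n} (ha : a ∉ A.inner l) :
    A.G.dist A.root a = l :=
  le_antisymm (A.dist_root_le hdepth a) (not_lt.mp ha)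

lemma mem_inner_of_level_pred (hl : 1 ≤ l) (i : A.Level (l - 1)) : i.1 ∈ A.inner l :=
  show _ < l by rw [i.2]; omega

lemma trunc_preconnected : (A.trunc l).Preconnected :=
  A.isTree.connected.preconnected_induce_dist_lt _ _

lemma gdeg_eq_gdeg_trunc_add_remDeg (hdepth : A.depth = l) {a : Fin A.n} (ha : a ∈ A.inner l) :
    gdeg A.G a = gdeg (A.trunc l) ⟨a, ha⟩ + A.remDeg l ⟨a, ha⟩ := by
  rw [gdeg_eq_gdeg_induce_add ha, remDeg, ← Nat.card_coe_set_eq]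
  congr 1
  refine Nat.card_congr (Equiv.subtypeEquivRight fun u => ?_)
  exact and_congr_right fun _ => ⟨A.dist_root_eq_of_notMem_inner hdepth, fun h => by
    simp [inner, h]⟩

lemma exists_level_pred_adj (hl : 1 ≤ l) {a : Fin A.n} (ha : A.G.dist A.root a = l) :
    ∃ i : A.Level (l - 1), A.G.Adj i a := by
  obtain ⟨i, hi, hdi⟩ := A.isTree.connected.exists_adj_dist_add_one (x := A.root) (v := a)
    (by omega)
  exact ⟨⟨i, by omega⟩, hi⟩

lemma level_pred_eq_of_adj (hl : 1 ≤ l) {a : Fin A.n} (ha : A.G.dist A.root a = l)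
    {i j : A.Level (l - 1)} (hi : A.G.Adj i a) (hj : A.G.Adj j a) : i = j := by
  have := i.2
  have := j.2
  exact Subtype.ext <| A.isTree.eq_of_adj_of_dist_add_one (x := A.root) hi hj (by omega) (by omega)

end FRT

section BallIso

variable {W : Type*} (G : SimpleGraph W) (A : FRT) (l : ℕ)

def RootedBallEquiv : Type _ :=
  Σ v : W, {e : G.induce (ballSet G v l) ≃g A.G // e ⟨v, self_mem_ballSet G v l⟩ = A.root}

def BallEmbedding : Type _ :=
  {ψ : A.G →g G // Injective ψ ∧ ∀ a, A.G.dist A.root a < l → gdeg G (ψ a) = gdeg A.G a}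

variable {G A l}

namespace RootedBallEquiv

def toHom (p : RootedBallEquiv G A l) : A.G →g G :=
  (Embedding.induce _).toHom.comp p.2.1.symm.toHom

lemma toHom_root (p : RootedBallEquiv G A l) : p.toHom A.root = p.1 := by
  obtain ⟨v, e, he⟩ := p
  change (e.symm A.root).1 = v
  rw [← he, RelIso.symm_apply_apply]

lemma gdeg_toHom [Finite W] (p : RootedBallEquiv G A l) {a : Fin A.n}
    (ha : A.G.dist A.root a < l) : gdeg G (p.toHom a) = gdeg A.G a := by
  have hreach : G.Reachable p.1 (p.toHom a) :=
    p.toHom_root ▸ (A.isTree.connected A.root a).map p.toHom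
  have hdist : G.dist p.1 (p.toHom a) < l :=
    p.toHom_root ▸ (dist_map_le p.toHom (A.isTree.connected A.root a)).trans_lt ha
  have hnbhd : G.neighborSet (p.toHom a) \ ballSet G p.1 l = ∅ := by
    refine Set.sdiff_eq_empty.mpr fun x hx => ⟨hreach.trans hx.reachable, ?_⟩
    have := hreach.dist_triangle_left x
    rw [dist_eq_one_iff_adj.mpr hx] at this
    omega
  obtain ⟨v, e, he⟩ := p
  change G.neighborSet (e.symm a).1 \ ballSet G v l = ∅ at hnbhd
  rw [show toHom ⟨v, e, he⟩ a = (e.symm a).1 from rfl, gdeg_eq_gdeg_induce_add (e.symm a).2,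
    hnbhd, Set.ncard_empty, add_zero, gdeg_iso e.symm]

def toBallEmbedding [Finite W] (p : RootedBallEquiv G A l) : BallEmbedding G A l :=
  ⟨p.toHom, (Embedding.induce (G := G) _).injective.comp p.2.1.symm.injective, fun _ => p.gdeg_toHom⟩

end RootedBallEquiv

namespace BallEmbedding

lemma adj_iff (hG : G.IsAcyclic) (ψ : BallEmbedding G A l) {a b : Fin A.n} :
    G.Adj (ψ.1 a) (ψ.1 b) ↔ A.G.Adj a b :=
  ⟨hG.adj_of_injective_hom A.isTree.connected.preconnected ψ.1 ψ.2.1, fun h => ψ.1.map_adj h⟩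

lemma ballSet_eq_range [Finite W] (hG : G.Connected) (hdepth : A.depth = l)
    (ψ : BallEmbedding G A l) : ballSet G (ψ.1 A.root) l = Set.range ψ.1 := by
  refine subset_antisymm ?_ ?_
  · rintro w ⟨-, hw⟩
    suffices h : ∀ d ≤ l, ∀ w, G.dist (ψ.1 A.root) w = d →
        ∃ a, A.G.dist A.root a ≤ d ∧ ψ.1 a = w by
      obtain ⟨a, -, rfl⟩ := h _ hw w rfl
      exact ⟨a, rfl⟩
    intro d
    induction d with
    | zero => exact fun _ w hw => ⟨A.root, by simp, hG.dist_eq_zero_iff.mp hw⟩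
    | succ d ih =>
      intro hd w hw
      obtain ⟨w', hw'w, hdw'⟩ := hG.exists_adj_dist_add_one (x := ψ.1 A.root) (v := w) (by omega)
      obtain ⟨a', ha', rfl⟩ := ih (by omega) w' (by omega)
      have himg := image_neighborSet_of_gdeg_eq ψ.1 ψ.2.1 (ψ.2.2 a' (by omega))
      obtain ⟨a, haa', rfl⟩ : w ∈ ψ.1 '' A.G.neighborSet a' := himg ▸ hw'w
      refine ⟨a, ?_, rfl⟩
      have := A.isTree.connected.dist_triangle (u := A.root) (v := a') (w := a)
      rw [dist_eq_one_iff_adj.mpr haa'] at this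
      omega
  · rintro _ ⟨a, rfl⟩
    exact ⟨(A.isTree.connected A.root a).map ψ.1,
      (dist_map_le ψ.1 (A.isTree.connected _ _)).trans (A.dist_root_le hdepth a)⟩

def toBallIso [Finite W] (hG : G.IsTree) (hdepth : A.depth = l) (ψ : BallEmbedding G A l) :
    A.G ≃g G.induce (ballSet G (ψ.1 A.root) l) where
  toEquiv := (Equiv.ofInjective _ ψ.2.1).trans
    (Equiv.setCongr (ψ.ballSet_eq_range hG.connected hdepth).symm)
  map_rel_iff' := ψ.adj_iff hG.isAcyclic

end BallEmbedding

lemma RootedBallEquiv.toBallEmbedding_bijective [Finite W] (hG : G.IsTree) (hdepth : A.depth = l) :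
    Bijective (RootedBallEquiv.toBallEmbedding (G := G) (A := A) (l := l)) := by
  constructor
  · rintro ⟨v, e, he⟩ ⟨v', e', he'⟩ h
    have hhom := congrArg Subtype.val h
    obtain rfl : v = v' := (toHom_root ⟨v, e, he⟩).symm.trans
      ((congrArg (fun f : A.G →g G => f A.root) hhom).trans (toHom_root ⟨v', e', he'⟩))
    have hsymm : e.symm = e'.symm :=
      RelIso.ext fun a => Subtype.ext (congrArg (fun f : A.G →g G => f a) hhom)
    obtain rfl : e = e' := by simpa using congrArg RelIso.symm hsymm
    rfl
  · intro ψ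
    refine ⟨⟨ψ.1 A.root, (ψ.toBallIso hG hdepth).symm, ?_⟩, rfl⟩
    rw [RelIso.symm_apply_eq]
    rfl

end BallIso

section Extension

variable {W : Type*} (G : SimpleGraph W) (A : FRT) {l : ℕ} (hl : 1 ≤ l)

def LabHomExtension : Type _ :=
  Σ φ : InjLabHom (A.trunc l) (A.remDeg l) G, ∀ i : A.Level (l - 1),
    A.DeepChild l i ≃ ↥(G.neighborSet (φ.1 ⟨i, A.mem_inner_of_level_pred hl i⟩) \ Set.range φ.1)

variable {G A hl}

namespace LabHomExtension

open Classical in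
def glue (hdepth : A.depth = l) (p : LabHomExtension G A hl) (a : Fin A.n) : W :=
  if ha : a ∈ A.inner l then p.1.1 ⟨a, ha⟩ else
    have hda := A.dist_root_eq_of_notMem_inner hdepth ha
    (p.2 (A.exists_level_pred_adj hl hda).choose
      ⟨a, (A.exists_level_pred_adj hl hda).choose_spec, hda⟩).1

variable (hdepth : A.depth = l) (p : LabHomExtension G A hl)

lemma glue_of_mem {a : Fin A.n} (ha : a ∈ A.inner l) : p.glue hdepth a = p.1.1 ⟨a, ha⟩ :=
  dif_pos ha

lemma glue_of_deepChild {i : A.Level (l - 1)} (c : A.DeepChild l i) :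
    p.glue hdepth c.1 = (p.2 i c).1 := by
  have hc : c.1 ∉ A.inner l := fun h => (show A.G.dist A.root c.1 < l from h).ne c.2.2
  rw [glue, dif_neg hc]
  have hchoice : ∀ (j : A.Level (l - 1)) (c' : A.DeepChild l j), j = i → c'.1 = c.1 →
      (p.2 j c').1 = (p.2 i c).1 := by
    rintro j c' rfl hc'
    rw [Subtype.ext hc']
  exact hchoice _ _ (A.level_pred_eq_of_adj hl c.2.2
    (A.exists_level_pred_adj hl c.2.2).choose_spec c.2.1) rfl

lemma exists_glue_eq_of_notMem {a : Fin A.n} (ha : a ∉ A.inner l) :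
    ∃ (i : A.Level (l - 1)) (c : A.DeepChild l i), c.1 = a ∧ p.glue hdepth a = (p.2 i c).1 := by
  have hda := A.dist_root_eq_of_notMem_inner hdepth ha
  obtain ⟨i, hia⟩ := A.exists_level_pred_adj hl hda
  exact ⟨i, ⟨a, hia, hda⟩, rfl, p.glue_of_deepChild hdepth ⟨a, hia, hda⟩⟩

lemma glue_adj_of_mem_of_notMem {a b : Fin A.n} (hab : A.G.Adj a b) (ha : a ∈ A.inner l)
    (hb : b ∉ A.inner l) : G.Adj (p.glue hdepth a) (p.glue hdepth b) := by
  have hdb := A.dist_root_eq_of_notMem_inner hdepth hb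
  have hda : A.G.dist A.root a = l - 1 := by
    have : A.G.dist A.root a < l := ha
    rcases A.isTree.dist_eq_dist_add_one_of_adj A.root hab with h | h <;> omega
  rw [p.glue_of_mem hdepth ha, p.glue_of_deepChild hdepth (i := ⟨a, hda⟩) ⟨b, hab, hdb⟩]
  exact (p.2 ⟨a, hda⟩ ⟨b, hab, hdb⟩).2.1

lemma glue_adj {a b : Fin A.n} (hab : A.G.Adj a b) :
    G.Adj (p.glue hdepth a) (p.glue hdepth b) := by
  by_cases ha : a ∈ A.inner l <;> by_cases hb : b ∈ A.inner l
  · rw [p.glue_of_mem hdepth ha, p.glue_of_mem hdepth hb]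
    exact p.1.2.2.1 hab
  · exact p.glue_adj_of_mem_of_notMem hdepth hab ha hb
  · exact (p.glue_adj_of_mem_of_notMem hdepth hab.symm hb ha).symm
  · exact absurd ((A.dist_root_eq_of_notMem_inner hdepth ha).trans
      (A.dist_root_eq_of_notMem_inner hdepth hb).symm) (A.isTree.dist_ne_of_adj A.root hab)

lemma glue_notMem_range {a : Fin A.n} (ha : a ∉ A.inner l) :
    p.glue hdepth a ∉ Set.range p.1.1 := by
  obtain ⟨i, c, rfl, h⟩ := p.exists_glue_eq_of_notMem hdepth ha
  exact h ▸ (p.2 i c).2.2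

lemma glue_injective (hG : G.IsAcyclic) : Injective (p.glue hdepth) := by
  intro a b hab
  by_cases ha : a ∈ A.inner l <;> by_cases hb : b ∈ A.inner l
  · rw [p.glue_of_mem hdepth ha, p.glue_of_mem hdepth hb] at hab
    exact congrArg Subtype.val (p.1.2.1 hab)
  · exact absurd (hab ▸ p.glue_of_mem hdepth ha ▸ ⟨_, rfl⟩) (p.glue_notMem_range hdepth hb)
  · exact absurd (hab ▸ p.glue_of_mem hdepth hb ▸ ⟨_, rfl⟩) (p.glue_notMem_range hdepth ha)
  · obtain ⟨i, c, rfl, hc⟩ := p.exists_glue_eq_of_notMem hdepth ha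
    obtain ⟨j, d, rfl, hd⟩ := p.exists_glue_eq_of_notMem hdepth hb
    rw [hc, hd] at hab
    have hmem := (p.2 i c).2
    rw [hab] at hmem
    have hij := hG.eq_of_adj_of_notMem_range A.trunc_preconnected p.1.2.2.hom p.1.2.1 hmem.2
      hmem.1.symm (p.2 j d).2.1.symm
    obtain rfl : i = j := Subtype.ext (congrArg (fun x : A.inner l => x.1) hij)
    exact congrArg Subtype.val ((p.2 i).injective (Subtype.ext hab))

lemma gdeg_glue {a : Fin A.n} (ha : a ∈ A.inner l) :
    gdeg G (p.glue hdepth a) = gdeg A.G a := by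
  rw [p.glue_of_mem hdepth ha, p.1.2.2.2, A.gdeg_eq_gdeg_trunc_add_remDeg hdepth ha]

def toBallEmbedding (hG : G.IsAcyclic) : BallEmbedding G A l :=
  ⟨⟨p.glue hdepth, p.glue_adj hdepth⟩, p.glue_injective hdepth hG, fun _ => p.gdeg_glue hdepth⟩

end LabHomExtension

end Extension

namespace BallEmbedding

variable {W : Type*} {G : SimpleGraph W} {A : FRT} {l : ℕ} (hl : 1 ≤ l) (hdepth : A.depth = l)
  (ψ : BallEmbedding G A l)

def restrict : InjLabHom (A.trunc l) (A.remDeg l) G :=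
  ⟨fun u => ψ.1 u.1, ψ.2.1.comp Subtype.val_injective, fun _ _ h => ψ.1.map_adj h,
    fun u => by rw [ψ.2.2 u.1 u.2, A.gdeg_eq_gdeg_trunc_add_remDeg hdepth u.2]⟩

lemma notMem_range_restrict {a : Fin A.n} (ha : A.G.dist A.root a = l) :
    ψ.1 a ∉ Set.range (ψ.restrict hdepth).1 := by
  rintro ⟨u, hu⟩
  have hua : u.1 = a := ψ.2.1 hu
  exact (show A.G.dist A.root u.1 < l from u.2).ne (hua ▸ ha)

def childMap (i : A.Level (l - 1)) (c : A.DeepChild l i) :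
    ↥(G.neighborSet ((ψ.restrict hdepth).1 ⟨i, A.mem_inner_of_level_pred hl i⟩) \
      Set.range (ψ.restrict hdepth).1) :=
  ⟨ψ.1 c.1, ψ.1.map_adj c.2.1, ψ.notMem_range_restrict hdepth c.2.2⟩

lemma childMap_bijective [Finite W] (i : A.Level (l - 1)) :
    Bijective (ψ.childMap hl hdepth i) := by
  refine ⟨fun c d h => Subtype.ext (ψ.2.1 (congrArg Subtype.val h)), ?_⟩
  rintro ⟨w, hw, hwr⟩
  have hi : A.G.dist A.root i < l := A.mem_inner_of_level_pred hl i
  obtain ⟨a, hia, rfl⟩ : w ∈ ψ.1 '' A.G.neighborSet i :=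
    image_neighborSet_of_gdeg_eq ψ.1 ψ.2.1 (ψ.2.2 i hi) ▸ hw
  have ha : a ∉ A.inner l := fun ha => hwr ⟨⟨a, ha⟩, rfl⟩
  exact ⟨⟨a, hia, A.dist_root_eq_of_notMem_inner hdepth ha⟩, rfl⟩

def toLabHomExtension [Finite W] : LabHomExtension G A hl :=
  ⟨ψ.restrict hdepth, fun i => Equiv.ofBijective _ (ψ.childMap_bijective hl hdepth i)⟩

lemma glue_toLabHomExtension [Finite W] : (ψ.toLabHomExtension hl hdepth).glue hdepth = ψ.1 := by
  funext a
  by_cases ha : a ∈ A.inner l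
  · exact LabHomExtension.glue_of_mem hdepth _ ha
  · obtain ⟨i, c, rfl, h⟩ := LabHomExtension.exists_glue_eq_of_notMem hdepth _ ha
    exact h

end BallEmbedding

lemma LabHomExtension.toBallEmbedding_bijective {W : Type*} [Finite W] {G : SimpleGraph W}
    {A : FRT} {l : ℕ} (hl : 1 ≤ l) (hdepth : A.depth = l) (hG : G.IsAcyclic) :
    Bijective (fun p : LabHomExtension G A hl => p.toBallEmbedding hdepth hG) := by
  constructor
  · rintro ⟨φ, m⟩ ⟨φ', m'⟩ h
    have hglue : glue (hl := hl) hdepth ⟨φ, m⟩ = glue (hl := hl) hdepth ⟨φ', m'⟩ :=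
      congrArg (fun ψ : BallEmbedding G A l => ⇑ψ.1) h
    obtain rfl : φ = φ' := Subtype.ext <| funext fun u =>
      (glue_of_mem hdepth ⟨φ, m⟩ u.2).symm.trans
        ((congrFun hglue u.1).trans (glue_of_mem hdepth ⟨φ', m'⟩ u.2))
    obtain rfl : m = m' := funext fun i => Equiv.ext fun c => Subtype.ext <|
      (glue_of_deepChild hdepth ⟨φ, m⟩ c).symm.trans
        ((congrFun hglue c.1).trans (glue_of_deepChild hdepth ⟨φ, m'⟩ c))
    rfl
  · exact fun ψ => ⟨ψ.toLabHomExtension hl hdepth,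
      Subtype.ext (RelHom.ext (congrFun (ψ.glue_toLabHomExtension hl hdepth)))⟩

section Counting

variable {V W : Type*}

instance [Finite V] [Finite W] {H : SimpleGraph V} {K : SimpleGraph W} : Finite (H ≃g K) :=
  Finite.of_injective _ RelIso.toEquiv_injective

instance [Finite V] [Finite W] {F : SimpleGraph V} {r : V → ℕ} {G : SimpleGraph W} :
    Finite (InjLabHom F r G) :=
  Subtype.finite

lemma card_equiv_of_card_eq {α β : Type*} [Finite α] [Finite β] (h : Nat.card α = Nat.card β) :
    Nat.card (α ≃ β) = (Nat.card α).factorial := by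
  obtain ⟨e⟩ := Finite.card_eq.mp h
  rw [← Nat.card_perm]
  exact Nat.card_congr ((Equiv.refl α).equivCongr e.symm)

def rootedIsoEquivAut {H : SimpleGraph V} {K : SimpleGraph W} {x : V} {y : W} (e₀ : H ≃g K)
    (h₀ : e₀ x = y) : {e : H ≃g K // e x = y} ≃ {f : K ≃g K // f y = y} where
  toFun e := ⟨e₀.symm.trans e.1, by simp [← h₀, e.2]⟩
  invFun f := ⟨e₀.trans f.1, by simp [h₀, f.2]⟩
  left_inv e := by ext; simp
  right_inv f := by ext; simp

lemma card_rootedBallEquiv {n : ℕ} (G : SimpleGraph (Fin n)) (A : FRT) (l : ℕ) :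
    Nat.card (RootedBallEquiv G A l) = nbhdCount G l A.G A.root * A.autCard := by
  classical
  have hfiber : ∀ v : Fin n,
      Nat.card {e : G.induce (ballSet G v l) ≃g A.G // e ⟨v, self_mem_ballSet G v l⟩ = A.root} =
        if RootedBallIso G v l A.G A.root then A.autCard else 0 := by
    intro v
    split_ifs with h
    · obtain ⟨e₀, he₀⟩ := h
      exact Nat.card_congr (rootedIsoEquivAut e₀ he₀)
    · have : IsEmpty {e : G.induce (ballSet G v l) ≃g A.G //
          e ⟨v, self_mem_ballSet G v l⟩ = A.root} := ⟨fun e => h ⟨e.1, e.2⟩⟩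
      exact Nat.card_of_isEmpty
  rw [RootedBallEquiv, Nat.card_sigma, Finset.sum_congr rfl fun v _ => hfiber v,
    Finset.sum_ite, Finset.sum_const_zero, add_zero, Finset.sum_const, smul_eq_mul, nbhdCount,
    Nat.card_eq_fintype_card, Fintype.card_subtype]

lemma card_labHomExtension [Finite W] {G : SimpleGraph W} (hG : G.IsAcyclic) {A : FRT} {l : ℕ}
    (hl : 1 ≤ l) : Nat.card (LabHomExtension G A hl) =
      injLabCount (A.trunc l) (A.remDeg l) G *
        ∏ i : A.Level (l - 1), (Nat.card (A.DeepChild l i)).factorial := by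
  have := Fintype.ofFinite (InjLabHom (A.trunc l) (A.remDeg l) G)
  have hfiber : ∀ φ : InjLabHom (A.trunc l) (A.remDeg l) G,
      Nat.card (∀ i : A.Level (l - 1), A.DeepChild l i ≃
        ↥(G.neighborSet (φ.1 ⟨i, A.mem_inner_of_level_pred hl i⟩) \ Set.range φ.1)) =
      ∏ i : A.Level (l - 1), (Nat.card (A.DeepChild l i)).factorial := by
    intro φ
    rw [Nat.card_pi]
    refine Finset.prod_congr rfl fun i _ => card_equiv_of_card_eq ?_
    rw [Nat.card_coe_set_eq, φ.2.2.ncard_neighborSet_diff_range hG A.trunc_preconnected φ.2.1]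
    rfl
  rw [LabHomExtension, Nat.card_sigma, Finset.sum_congr rfl fun φ _ => hfiber φ,
    Finset.sum_const, smul_eq_mul, Finset.card_univ, ← Nat.card_eq_fintype_card]
  rfl

end Counting

/-- For a labeled tree `G` on `n` vertices and an `l`-deep rooted tree
`T_x^l`: `n · p(l, T_x^l, U(G)) · |Aut(T_x^l)|` equals the number of injective labeled
homomorphisms from the numbered tree `(T', r')` (obtained by deleting the depth-`l`
vertices, with remainder degrees counting the deleted neighbors) to `G`, times
`∏_{i ∈ T_{l−1}} c_i!`. -/
theorem nbhd_count_eq_injLab (n : ℕ) (G : SimpleGraph (Fin n)) (hG : G.IsTree)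
    (A : FRT) (l : ℕ) (hl : 1 ≤ l) (hdepth : A.depth = l) :
    (n : ℚ) * ((nbhdCount G l A.G A.root : ℚ) / (n : ℚ)) * (A.autCard : ℚ) =
      (injLabCount (A.G.induce {v : Fin A.n | A.G.dist A.root v < l})
          (fun v => Nat.card {u : Fin A.n // A.G.Adj v.1 u ∧ A.G.dist A.root u = l})
          G : ℚ) *
        ∏ᶠ i ∈ {i : Fin A.n | A.G.dist A.root i = l - 1},
          ((Nat.card {u : Fin A.n // A.G.Adj i u ∧ A.G.dist A.root u = l}).factorial : ℚ) := by
  have hn : (n : ℚ) ≠ 0 := Nat.cast_ne_zero.mpr (Fin.pos_iff_nonempty.mpr hG.connected.nonempty).ne'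
  have hcount : nbhdCount G l A.G A.root * A.autCard = injLabCount (A.trunc l) (A.remDeg l) G *
      ∏ i : A.Level (l - 1), (Nat.card (A.DeepChild l i)).factorial := by
    rw [← card_rootedBallEquiv, ← card_labHomExtension hG.isAcyclic hl,
      Nat.card_eq_of_bijective _ (RootedBallEquiv.toBallEmbedding_bijective hG hdepth),
      Nat.card_eq_of_bijective _ (LabHomExtension.toBallEmbedding_bijective hl hdepth hG.isAcyclic)]
  rw [mul_div_cancel₀ _ hn, ← finprod_set_coe_eq_finprod_mem, finprod_eq_prod_of_fintype,
    ← Nat.cast_mul, hcount]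
  push_cast
  rfl

end RTrees
end
end
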